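/- Let k be a commutative ring, V a k-module, and n ∈ ℕ. Let A = Σ_{i=2}^{n+1} τ_{1,i} ∈ End_k(V^{⊗(n+1)}), where τ_{1,i} is the endomorphism of V^{⊗(n+1)} swapping the 1st and i-th tensor factors and fixing the others. Then A, viewed as a k-linear map V⊗M → V⊗M with M = V^{⊗n}, satisfies the curried gl identity. (This is the action of the curried general linear algebra on the n-th tensor power of the standard representation.) -/

import Mathlib

open TensorProduct

/-- The braiding of the first two factors of `V ⊗ V ⊗ M` (tensored with `id` on `M`). -/
noncomputable def glTau (k V M : Type) [CommRing k] [AddCommGroup V] [Module k V]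
    [AddCommGroup M] [Module k M] :
    V ⊗[k] (V ⊗[k] M) →ₗ[k] V ⊗[k] (V ⊗[k] M) :=
  (TensorProduct.assoc k V V M).toLinearMap ∘ₗ
    LinearMap.rTensor M (TensorProduct.comm k V V).toLinearMap ∘ₗ
    (TensorProduct.assoc k V V M).symm.toLinearMap

/-- The curried gl identity for a map `a : V ⊗ M → V ⊗ M`:
with `τ` the braiding of the two `V`-factors of `V ⊗ V ⊗ M`, `a₂ = id_V ⊗ a` and
`a₁ = τ ∘ a₂ ∘ τ`, it reads `a₁ ∘ a₂ - a₂ ∘ a₁ = τ ∘ (a₁ - a₂)`. -/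
def CurriedGlIdentity (k V M : Type) [CommRing k] [AddCommGroup V] [Module k V]
    [AddCommGroup M] [Module k M] (a : V ⊗[k] M →ₗ[k] V ⊗[k] M) : Prop :=
  let τ : V ⊗[k] (V ⊗[k] M) →ₗ[k] V ⊗[k] (V ⊗[k] M) := glTau k V M
  let a₂ : V ⊗[k] (V ⊗[k] M) →ₗ[k] V ⊗[k] (V ⊗[k] M) := LinearMap.lTensor V a
  let a₁ : V ⊗[k] (V ⊗[k] M) →ₗ[k] V ⊗[k] (V ⊗[k] M) := τ ∘ₗ a₂ ∘ₗ τ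
  a₁ ∘ₗ a₂ - a₂ ∘ₗ a₁ = τ ∘ₗ (a₁ - a₂)

open PiTensorProduct

/-- The canonical equivalence `V^{⊗(n+1)} ≅ V ⊗ V^{⊗n}` splitting off the first
tensor factor. -/
noncomputable def splitFirst (k V : Type) [CommRing k] [AddCommGroup V] [Module k V] (n : ℕ) :
    (⨂[k] (_ : Fin (n + 1)), V) ≃ₗ[k] V ⊗[k] (⨂[k] (_ : Fin n), V) :=
  (PiTensorProduct.reindex k (fun _ => V)
      ((finCongr (by omega : n + 1 = 1 + n)).trans finSumFinEquiv.symm)).trans <|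
    ((PiTensorProduct.tmulEquiv k V).symm.trans
      (TensorProduct.congr (PiTensorProduct.subsingletonEquiv (0 : Fin 1))
        (LinearEquiv.refl k _)))

/-!
On a pure tensor `v ⊗ w ⊗ m`, `a₂` moves `w` into each slot `i` of `m` and pulls `m i` out,
while `a₁` does the same with `v`. In `a₁ a₂ - a₂ a₁` the terms acting on two different slots
cancel in pairs, and the terms acting twice on the same slot are exactly `τ (a₁ - a₂)`.
-/

theorem Finset.sum_sum_sub_sum_sum_eq_sum_diag {ι A : Type*} [Fintype ι] [DecidableEq ι]
    [AddCommGroup A] (F G : ι → ι → A) (h : ∀ i j, i ≠ j → F i j = G j i) :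
    (∑ i, ∑ j, F i j) - (∑ i, ∑ j, G i j) = ∑ i, (F i i - G i i) := by
  rw [Finset.sum_comm (f := G), ← Finset.sum_sub_distrib]
  refine Finset.sum_congr rfl fun i _ => ?_
  rw [← Finset.sum_sub_distrib]
  exact Finset.sum_eq_single i (fun j _ hj => sub_eq_zero.2 (h i j hj.symm)) (by simp)

variable {k V : Type} [CommRing k] [AddCommGroup V] [Module k V]

@[simp]
theorem glTau_tmul {M : Type} [AddCommGroup M] [Module k M] (u w : V) (m : M) :
    glTau k V M (u ⊗ₜ[k] (w ⊗ₜ[k] m)) = w ⊗ₜ[k] (u ⊗ₜ[k] m) := by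
  simp [glTau]

variable {n : ℕ}

theorem splitFirst_tprod (x : Fin (n + 1) → V) :
    splitFirst k V n (tprod k x) = x 0 ⊗ₜ[k] tprod k (Fin.tail x) := by
  simp only [splitFirst, LinearEquiv.trans_apply, reindex_tprod, Equiv.symm_trans,
    Equiv.symm_symm, finCongr_symm, Equiv.trans_apply, finCongr_apply, tmulEquiv_symm_apply,
    finSumFinEquiv_apply_left, finSumFinEquiv_apply_right, Fin.cast_natAdd, Fin.addNat_one,
    congr_tmul, subsingletonEquiv_apply_tprod, LinearEquiv.refl_apply]
  rfl

theorem splitFirst_symm_tmul_tprod (v : V) (m : Fin n → V) :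
    (splitFirst k V n).symm (v ⊗ₜ[k] tprod k m) = tprod k (Fin.cons v m : Fin (n + 1) → V) := by
  rw [LinearEquiv.symm_apply_eq, splitFirst_tprod, Fin.cons_zero, Fin.tail_cons]

theorem Fin.cons_apply_swap_zero_succ {α : Type*} (v : α) (m : Fin n → α) (i : Fin n) :
    (fun j => (Fin.cons v m : Fin (n + 1) → α) (Equiv.swap 0 i.succ j))
      = Fin.cons (m i) (Function.update m i v) := by
  funext j
  refine Fin.cases ?_ (fun j => ?_) j
  · simp
  · rcases eq_or_ne j i with rfl | h
    · simp
    · simp [Equiv.swap_apply_of_ne_of_ne (Fin.succ_ne_zero j) (Fin.succ_injective n |>.ne h), h]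

noncomputable def firstTranspositionSum (k V : Type) [CommRing k] [AddCommGroup V] [Module k V]
    (n : ℕ) : V ⊗[k] (⨂[k] (_ : Fin n), V) →ₗ[k] V ⊗[k] (⨂[k] (_ : Fin n), V) :=
  (splitFirst k V n).toLinearMap ∘ₗ
    (∑ i : Fin n,
      (PiTensorProduct.reindex k (fun (_ : Fin (n + 1)) => V)
        (Equiv.swap (0 : Fin (n + 1)) i.succ)).toLinearMap) ∘ₗ
    (splitFirst k V n).symm.toLinearMap

theorem firstTranspositionSum_tmul_tprod (v : V) (m : Fin n → V) :
    firstTranspositionSum k V n (v ⊗ₜ[k] tprod k m)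
      = ∑ i : Fin n, m i ⊗ₜ[k] tprod k (Function.update m i v) := by
  simp only [firstTranspositionSum, LinearMap.comp_apply, LinearEquiv.coe_coe,
    splitFirst_symm_tmul_tprod, LinearMap.coe_sum, Finset.sum_apply, map_sum, reindex_tprod,
    Equiv.symm_swap]
  refine Finset.sum_congr rfl fun i _ => ?_
  rw [Fin.cons_apply_swap_zero_succ, splitFirst_tprod, Fin.cons_zero, Fin.tail_cons]

theorem curriedGlIdentity_firstTranspositionSum (k V : Type) [CommRing k] [AddCommGroup V]
    [Module k V] (n : ℕ) :
    CurriedGlIdentity k V (⨂[k] (_ : Fin n), V) (firstTranspositionSum k V n) := by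
  dsimp only [CurriedGlIdentity]
  ext v w m
  simp only [LinearMap.compMultilinearMap_apply, AlgebraTensorModule.curry_apply,
    TensorProduct.curry_apply, LinearMap.restrictScalars_apply, LinearMap.sub_apply,
    LinearMap.comp_apply, glTau_tmul, LinearMap.lTensor_tmul, firstTranspositionSum_tmul_tprod,
    tmul_sum, map_sum, map_sub]
  rw [Finset.sum_sum_sub_sum_sum_eq_sum_diag _ _ fun i j hij => by
    rw [Function.update_of_ne hij.symm, Function.update_of_ne hij, Function.update_comm hij]]
  simp only [Function.update_self, Function.update_idem, Finset.sum_sub_distrib]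

/-- Let `A = ∑_{i=2}^{n+1} τ_{1,i}` be the endomorphism of `V^{⊗(n+1)}`
given by the sum of the transpositions of the first factor with each of the remaining `n`
factors.  Then `A`, viewed as a map `V ⊗ M → V ⊗ M` with `M = V^{⊗ n}` via the canonical
equivalence, satisfies the curried gl identity: it is the action of the curried general
linear algebra on the `n`-th tensor power of the standard representation. -/
theorem statement4 (k V : Type) [CommRing k] [AddCommGroup V] [Module k V] (n : ℕ) :
    CurriedGlIdentity k V (⨂[k] (_ : Fin n), V)
      ((splitFirst k V n).toLinearMap ∘ₗ
        (∑ i : Fin n,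
          (PiTensorProduct.reindex k (fun (_ : Fin (n + 1)) => V)
            (Equiv.swap (0 : Fin (n + 1)) i.succ)).toLinearMap) ∘ₗ
        (splitFirst k V n).symm.toLinearMap) :=
  curriedGlIdentity_firstTranspositionSum k V n
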